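/- For every v ∈ V, the function M_v⁻¹ : V → R is a K-class, i.e., for every edge (i,j) ∈ E the element 1 − e^{α(i,j)} divides M_v⁻¹(i) − M_v⁻¹(j) in R. -/

import Mathlib

noncomputable section

/-- Standard basis vector `e_k` of `ℤ^{n+1}` (1-indexed), with `e 0 = 0`. -/
def ee (n k : ℕ) : Fin (n+1) → ℤ := fun t => if (t : ℕ) + 1 = k then 1 else 0

/-- The function `h : V → ℤ^{n+1}`. -/
def hh (n j : ℕ) : Fin (n+1) → ℤ :=
  if j ≤ n+2 then ee n (j-1) - ee n (n+1) else ee n n - ee n (2*n+2-j)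

/-- The Laurent polynomial ring `R = ℤ[y₁^{±1},…,y_{n+1}^{±1}]`. -/
abbrev Rg (n : ℕ) : Type := AddMonoidAlgebra ℤ (Fin (n+1) → ℤ)

/-- The monomial `e^w`. -/
def ex (n : ℕ) (w : Fin (n+1) → ℤ) : Rg n := AddMonoidAlgebra.single w 1

/-- `ī = 2n+3-i`. -/
def bar (n i : ℕ) : ℕ := 2*n+3 - i

/-- Membership in the vertex set `V = {1,…,2n+2}`. -/
def memV (n i : ℕ) : Prop := 1 ≤ i ∧ i ≤ 2*n+2

/-- The axial function `α(i,j) = h(j) - h(i)`. -/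
def axl (n i j : ℕ) : Fin (n+1) → ℤ := hh n j - hh n i

/-- The K-class `M_v`. -/
def Mv (n v : ℕ) (l : ℕ) : Rg n :=
  if l = v then 1
  else if l = bar n v then ex n (ee n n - ee n (n+1) - (2:ℤ) • hh n (bar n v))
  else ex n (hh n v - hh n l)

/-- The pointwise inverse `M_v⁻¹`. -/
def MvInv (n v : ℕ) (l : ℕ) : Rg n :=
  if l = v then 1
  else if l = bar n v then ex n (-(ee n n - ee n (n+1) - (2:ℤ) • hh n (bar n v)))
  else ex n (hh n l - hh n v)

/-- A subset `P ⊆ V` is admissible if it is nonempty and contains no pair `{i, ī}`. -/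
def admissible (n : ℕ) (P : Finset ℕ) : Prop :=
  P.Nonempty ∧ (∀ i ∈ P, memV n i) ∧ (∀ i ∈ P, bar n i ∉ P)

/-- The vertex set as a finset. -/
def Vfin (n : ℕ) : Finset ℕ := Finset.Icc 1 (2*n+2)

/-- The Thom class `Δ_P`. -/
def Dl (n : ℕ) (P : Finset ℕ) (l : ℕ) : Rg n :=
  if l ∈ P then
    ∏ k ∈ (Vfin n).filter (fun k => k ∉ P ∧ k ≠ bar n l), (1 - ex n (axl n l k))
  else 0

/-- `φ : V → R` is a K-class if `1 - e^{α(i,j)}` divides `φ(i) - φ(j)` for every edge `(i,j)`. -/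
def isKClass (n : ℕ) (f : ℕ → Rg n) : Prop :=
  ∀ i j : ℕ, memV n i → memV n j → j ≠ i → j ≠ bar n i →
    (1 - ex n (axl n i j)) ∣ (f i - f j)

/-!
Since `h(v) + h(v̄) = e_n - e_{n+1}`, the exceptional value of `M_v⁻¹` at `v̄` is again
`e^{h(v̄) - h(v)}`, so `M_v⁻¹(l) = e^{h(l) - h(v)}` for every vertex `l`. Differences of
monomials `e^a - e^b = (1 - e^{b-a}) e^a` then give the divisibility along every edge.
-/

theorem AddMonoidAlgebra.one_sub_single_sub_dvd_single_sub_single {k G : Type*} [CommRing k]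
    [AddCommGroup G] (a b : G) :
    (1 - single (b - a) (1 : k)) ∣ single a 1 - single b 1 :=
  ⟨single a 1, by rw [sub_mul, one_mul, single_mul_single, sub_add_cancel, one_mul]⟩

lemma hh_add_hh_bar (n v : ℕ) (hv : memV n v) :
    hh n v + hh n (bar n v) = ee n n - ee n (n+1) := by
  obtain ⟨hv₁, hv₂⟩ := hv
  funext ⟨t, ht⟩
  unfold hh bar
  by_cases hA : v ≤ n+2 <;> by_cases hB : 2*n+3-v ≤ n+2 <;>
    simp only [hA, hB, if_true, if_false, Pi.add_apply, Pi.sub_apply, ee] <;> split_ifs <;> omega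

lemma MvInv_eq_ex (n v : ℕ) (hv : memV n v) (l : ℕ) :
    MvInv n v l = ex n (hh n l - hh n v) := by
  unfold MvInv
  split_ifs with hlv hlbar
  · rw [hlv, sub_self]
    rfl
  · rw [hlbar, ← hh_add_hh_bar n v hv]
    congr 1
    abel
  · rfl

theorem MvInv_isKClass_general (n : ℕ) (v : ℕ) (hv : memV n v) :
    isKClass n (MvInv n v) := by
  intro i j _ _ _ _
  rw [MvInv_eq_ex n v hv i, MvInv_eq_ex n v hv j, axl,
    show hh n j - hh n i = (hh n j - hh n v) - (hh n i - hh n v) by abel]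
  exact AddMonoidAlgebra.one_sub_single_sub_dvd_single_sub_single _ _

/-- For every `v ∈ V`, the function `M_v⁻¹ : V → R` is a K-class. -/
theorem MvInv_isKClass (n : ℕ) (hn : 1 ≤ n) (v : ℕ) (hv : memV n v) :
    isKClass n (MvInv n v) :=
  MvInv_isKClass_general n v hv
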